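/- arXiv:1406.1579 — 2 statements merged into one kernel-verified Lean document; each statement's English description precedes it below -/
import Mathlib

section
/- Let X ∈ ℝ^{h×w}, p ≥ 1, let k be a multiple of w with s = k/w ≤ h, let B ≥ 1 be a natural number, let d > 1 be real, and let λ ≥ 0. Suppose Ω is a support with exactly s entries in every column that minimizes ‖X − X_Γ‖_p^p + λ·EMD(Γ) over all supports Γ with exactly s entries in every column, and suppose EMD(Ω) ≥ dB. Then λ ≤ OPT/(B(d−1)), where OPT = min_{Γ ∈ 𝕄_{k,B}} ‖X − X_Γ‖_p^p. -/
/-- The Earth Mover's Distance between two finite sets of naturals of equal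
cardinality: the minimum, over bijections `π` from `A` onto `B`, of
`∑ a ∈ A, |a - π a|`. -/
noncomputable def natEMD (A B : Finset ℕ) : ℕ :=
  sInf { d : ℕ | ∃ π : ℕ → ℕ, Set.BijOn π ↑A ↑B ∧
    d = ∑ a ∈ A, ((a : ℤ) - (π a : ℤ)).natAbs }

/-- The support of column `c` of a matrix support `Ω`: the set of rows `r`
with `(r, c) ∈ Ω`. -/
def colSupp {h w : ℕ} (Ω : Finset (Fin h × Fin w)) (c : ℕ) : Finset ℕ :=
  (Ω.filter (fun q => (q.2 : ℕ) = c)).image (fun q => (q.1 : ℕ))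

/-- The support-EMD of a matrix support `Ω` (with exactly `s` entries per
column): the sum of the EMDs of consecutive column supports. -/
noncomputable def suppEMD {h w : ℕ} (Ω : Finset (Fin h × Fin w)) : ℕ :=
  ∑ c ∈ Finset.range (w - 1), natEMD (colSupp Ω c) (colSupp Ω (c + 1))

/-- The Constrained EMD model `𝕄_{k,B}` with column sparsity `s = k/w` and
EMD budget `B`: supports in the `h × w` grid with exactly `s` entries per
column and support-EMD at most `B`. -/
noncomputable def cemdModel (h w s B : ℕ) : Set (Finset (Fin h × Fin w)) :=
  { Ω | (∀ c < w, (colSupp Ω c).card = s) ∧ suppEMD Ω ≤ B }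
/-- The entrywise ℓ_p norm of a matrix (for real `p ≥ 1`). -/
noncomputable def matLpNorm {h w : ℕ} (p : ℝ) (X : Matrix (Fin h) (Fin w) ℝ) : ℝ :=
  (∑ r, ∑ c, |X r c| ^ p) ^ (1 / p)

/-- `X_Ω`: the matrix `X` with all entries outside `Ω` set to zero. -/
def matRestrict {h w : ℕ} (X : Matrix (Fin h) (Fin w) ℝ)
    (Ω : Finset (Fin h × Fin w)) : Matrix (Fin h) (Fin w) ℝ :=
  Matrix.of fun r c => if (r, c) ∈ Ω then X r c else 0


/-! Comparing the penalized minimizer `Ω` with any `Γ ∈ 𝕄_{k,B}` gives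
`‖X - X_Ω‖ₚᵖ + λ d B ≤ ‖X - X_Γ‖ₚᵖ + λ B`, hence `λ (d - 1) B ≤ ‖X - X_Γ‖ₚᵖ`; taking the infimum
gives `λ (d - 1) B ≤ OPT`. The infimum is over a nonempty set because the first `s` rows of
every column form a support of EMD `0`. -/

lemma natEMD_self (A : Finset ℕ) : natEMD A A = 0 :=
  Nat.sInf_eq_zero.mpr <| Or.inl ⟨id, Set.bijOn_id _, by simp⟩

lemma matLpNorm_rpow_nonneg {h w : ℕ} (p : ℝ) (X : Matrix (Fin h) (Fin w) ℝ) :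
    0 ≤ matLpNorm p X ^ p :=
  Real.rpow_nonneg (Real.rpow_nonneg (Finset.sum_nonneg fun _ _ =>
    Finset.sum_nonneg fun _ _ => Real.rpow_nonneg (abs_nonneg _) p) _) p

def topRows (h w s : ℕ) : Finset (Fin h × Fin w) :=
  Finset.univ.filter fun q => (q.1 : ℕ) < s

lemma colSupp_topRows {h w s c : ℕ} (hc : c < w) :
    colSupp (topRows h w s) c = Finset.range (min s h) := by
  ext n
  simp only [colSupp, topRows, Finset.mem_image, Finset.mem_filter, Finset.mem_univ,
    true_and, Finset.mem_range, lt_min_iff]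
  constructor
  · rintro ⟨q, ⟨hqs, -⟩, rfl⟩
    exact ⟨hqs, q.1.isLt⟩
  · rintro ⟨hns, hnh⟩
    exact ⟨(⟨n, hnh⟩, ⟨c, hc⟩), ⟨hns, rfl⟩, rfl⟩

lemma suppEMD_topRows (h w s : ℕ) : suppEMD (topRows h w s) = 0 :=
  Finset.sum_eq_zero fun c hc => by
    rw [Finset.mem_range] at hc
    rw [colSupp_topRows (by omega), colSupp_topRows (by omega), natEMD_self]

lemma topRows_mem_cemdModel {h w s : ℕ} (B : ℕ) (hs : s ≤ h) :
    topRows h w s ∈ cemdModel h w s B :=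
  ⟨fun c hc => by rw [colSupp_topRows hc, Finset.card_range, min_eq_left hs],
    by rw [suppEMD_topRows]; exact Nat.zero_le B⟩

lemma mul_sub_le_csInf_of_penalized_min {α : Type*} {f g : α → ℝ} {S M : Set α} {Ω : α}
    {lam B : ℝ} (hlam : 0 ≤ lam) (hfΩ : 0 ≤ f Ω)
    (hmin : ∀ Γ ∈ S, f Ω + lam * g Ω ≤ f Γ + lam * g Γ)
    (hM : M ⊆ {Γ ∈ S | g Γ ≤ B}) (hMne : M.Nonempty) :
    lam * (g Ω - B) ≤ sInf (f '' M) := by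
  refine le_csInf (hMne.image f) ?_
  rintro _ ⟨Γ, hΓM, rfl⟩
  obtain ⟨hΓS, hΓB⟩ := hM hΓM
  have hpenalty : lam * g Γ ≤ lam * B := mul_le_mul_of_nonneg_left hΓB hlam
  linarith [hmin Γ hΓS]

theorem stmt14_general (h w s B : ℕ) (p : ℝ) (hs : s ≤ h)
    (hB : 1 ≤ B) (d : ℝ) (hd : 1 < d)
    (X : Matrix (Fin h) (Fin w) ℝ) (lam : ℝ) (hlam : 0 ≤ lam)
    (Ω : Finset (Fin h × Fin w))
    (hmin : ∀ Γ : Finset (Fin h × Fin w), (∀ c < w, (colSupp Γ c).card = s) →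
      matLpNorm p (X - matRestrict X Ω) ^ p + lam * suppEMD Ω ≤
        matLpNorm p (X - matRestrict X Γ) ^ p + lam * suppEMD Γ)
    (hEMD : d * B ≤ (suppEMD Ω : ℝ))
    (OPT : ℝ)
    (hOPT : OPT = sInf ((fun Γ => matLpNorm p (X - matRestrict X Γ) ^ p) ''
      cemdModel h w s B)) :
    lam ≤ OPT / (B * (d - 1)) := by
  have hlagrange : lam * (suppEMD Ω - B) ≤ OPT :=
    hOPT ▸ mul_sub_le_csInf_of_penalized_min (g := fun Γ => (suppEMD Γ : ℝ)) hlam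
      (matLpNorm_rpow_nonneg p _) hmin
      (fun Γ ⟨hΓcol, hΓB⟩ => ⟨hΓcol, by exact_mod_cast hΓB⟩)
      ⟨_, topRows_mem_cemdModel B hs⟩
  have hB' : (1 : ℝ) ≤ B := by exact_mod_cast hB
  have hgap : lam * (B * (d - 1)) ≤ lam * (suppEMD Ω - B) :=
    mul_le_mul_of_nonneg_left (by linarith) hlam
  rw [le_div_iff₀ (mul_pos (by linarith) (by linarith))]
  linarith

theorem stmt14 (h w s B k : ℕ) (p : ℝ) (hp : 1 ≤ p) (hk : k = s * w) (hs : s ≤ h)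
    (hB : 1 ≤ B) (d : ℝ) (hd : 1 < d)
    (X : Matrix (Fin h) (Fin w) ℝ) (lam : ℝ) (hlam : 0 ≤ lam)
    (Ω : Finset (Fin h × Fin w))
    (hcol : ∀ c < w, (colSupp Ω c).card = s)
    (hmin : ∀ Γ : Finset (Fin h × Fin w), (∀ c < w, (colSupp Γ c).card = s) →
      matLpNorm p (X - matRestrict X Ω) ^ p + lam * suppEMD Ω ≤
        matLpNorm p (X - matRestrict X Γ) ^ p + lam * suppEMD Γ)
    (hEMD : d * B ≤ (suppEMD Ω : ℝ))
    (OPT : ℝ)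
    (hOPT : OPT = sInf ((fun Γ => matLpNorm p (X - matRestrict X Γ) ^ p) ''
      cemdModel h w s B)) :
    lam ≤ OPT / (B * (d - 1)) :=
  stmt14_general h w s B p hs hB d hd X lam hlam Ω hmin hEMD OPT hOPT
end

section
/- Let m ≥ 1 and n ≥ 2 be natural numbers and let A be a random m×n matrix whose entries are independent and identically distributed, each equal to +1/√m or −1/√m with probability 1/2. Let e₁ ∈ ℝⁿ be the first standard basis vector and a = AᵀA e₁. Then: (i) a₁ = 1 almost surely; (ii) E[a_i²] = 1/m for every i ≥ 2; and (iii) for every t > 0, the probability that Σ_{i=2}^n a_i² ≤ (n−1)(1/m − t) is at most exp(−2(n−1)t²). In particular, for any real c > 1, if (n−1)(1/m − t) ≥ 1/(c²−1), then ‖a‖₂² ≥ c²/(c²−1) with probability at least 1 − exp(−2(n−1)t²). -/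
/-!
Write each entry as `A k i = ε k i / √m` with independent uniform signs `ε`. Then
`a i = (1/m) ∑ k, ε k i * ε k 0`, so `a 0 = 1`. Multiplying every column `i ≠ 0` entrywise by
column `0` is a bijection of sign patterns, so it preserves the uniform law; after it, `a i` for
`i ≠ 0` is the mean of the `m` independent signs of column `i`. Hence the `a i ^ 2`, `i ≠ 0`, are
independent, lie in `[0, 1]` and have mean `1/m`, and Hoeffding's inequality bounds the lower tail
of their sum. Off that event, `‖a‖² > 1 + 1/(c² - 1) = c²/(c² - 1)`.
-/

open MeasureTheory ProbabilityTheory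
open scoped ENNReal Matrix

noncomputable def boolSign (b : Bool) : ℝ := if b then -1 else 1

lemma boolSign_xor (a b : Bool) : boolSign (xor a b) = boolSign a * boolSign b := by
  cases a <;> cases b <;> norm_num [boolSign]

lemma boolSign_mul_self (b : Bool) : boolSign b * boolSign b = 1 := by
  cases b <;> norm_num [boolSign]

lemma abs_boolSign (b : Bool) : |boolSign b| = 1 := by
  cases b <;> norm_num [boolSign]

section Uniform

variable {α β : Type*} [Fintype α] [MeasurableSpace α] [MeasurableSingletonClass α]
  [Fintype β] [MeasurableSpace β] [MeasurableSingletonClass β]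

lemma uniformOn_univ_singleton (x : α) :
    uniformOn (Set.univ : Set α) {x} = (Fintype.card α : ℝ≥0∞)⁻¹ := by
  simp [uniformOn_univ]

lemma map_uniformOn_univ_equiv (e : α ≃ β) :
    (uniformOn (Set.univ : Set α)).map e = uniformOn Set.univ := by
  refine Measure.ext_of_singleton fun y => ?_
  rw [Measure.map_apply (measurable_of_finite e) (measurableSet_singleton y),
    ← e.image_symm_eq_preimage, Set.image_singleton, uniformOn_univ_singleton,
    uniformOn_univ_singleton, Fintype.card_congr e]

lemma uniformOn_univ_pi {ι : Type*} [Fintype ι] :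
    (uniformOn Set.univ : Measure (ι → α)) = Measure.pi fun _ => uniformOn Set.univ := by
  rw [← uniformOn_pi, Set.pi_univ]

end Uniform

lemma integral_boolSign_uniformOn : ∫ b, boolSign b ∂(uniformOn Set.univ) = 0 := by
  rw [integral_fintype Integrable.of_finite]
  simp only [Fintype.sum_bool, measureReal_def, uniformOn_univ_singleton, boolSign, smul_eq_mul]
  norm_num

section SignMean

variable {κ : Type*} [Fintype κ]

noncomputable def signMean (τ : κ → Bool) : ℝ := (∑ k, boolSign (τ k)) / Fintype.card κ

lemma integral_boolSign_mul_boolSign [DecidableEq κ] (k l : κ) :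
    ∫ τ : κ → Bool, boolSign (τ k) * boolSign (τ l) ∂(uniformOn Set.univ)
      = if k = l then 1 else 0 := by
  split_ifs with hkl
  · simp [hkl, boolSign_mul_self]
  · rw [uniformOn_univ_pi]
    have hindep := (iIndepFun_pi (μ := fun _ : κ => (uniformOn Set.univ : Measure Bool))
      (X := fun _ => boolSign) fun _ => (measurable_of_finite _).aemeasurable).indepFun hkl
    have h := hindep.integral_mul_eq_mul_integral (measurable_of_finite _).aestronglyMeasurable
      (measurable_of_finite _).aestronglyMeasurable
    simp only [Pi.mul_apply] at h
    rw [h, integral_comp_eval (measurable_of_finite _).aestronglyMeasurable,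
      integral_boolSign_uniformOn, zero_mul]

lemma integral_signMean_sq :
    ∫ τ : κ → Bool, signMean τ ^ 2 ∂(uniformOn Set.univ) = 1 / Fintype.card κ := by
  classical
  have hsum : ∫ τ : κ → Bool, (∑ k, boolSign (τ k)) ^ 2 ∂(uniformOn Set.univ)
      = Fintype.card κ := by
    simp_rw [sq, Finset.sum_mul_sum]
    rw [integral_finsetSum _ fun k _ => integrable_finsetSum _ fun l _ => Integrable.of_finite]
    simp_rw [integral_finsetSum _ fun l _ => Integrable.of_finite, integral_boolSign_mul_boolSign]
    simp
  simp_rw [signMean, div_pow, integral_div, hsum]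
  rcases eq_or_ne (Fintype.card κ : ℝ) 0 with h | h
  · simp [h]
  · field_simp

lemma abs_signMean_le_one (τ : κ → Bool) : |signMean τ| ≤ 1 := by
  rw [signMean, abs_div, Nat.abs_cast]
  refine div_le_one_of_le₀ ?_ (Nat.cast_nonneg _)
  calc |∑ k, boolSign (τ k)| ≤ ∑ k, |boolSign (τ k)| := Finset.abs_sum_le_sum_abs _ _
    _ = Fintype.card κ := by simp [abs_boolSign]

lemma sq_signMean_mem_Icc (τ : κ → Bool) : signMean τ ^ 2 ∈ Set.Icc (0 : ℝ) 1 :=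
  ⟨sq_nonneg _, (sq_le_one_iff_abs_le_one _).2 (abs_signMean_le_one τ)⟩

end SignMean

lemma measure_sum_le_le_of_iIndepFun_mem_Icc {Ω ι : Type*} [MeasurableSpace Ω] {μ : Measure Ω}
    [IsProbabilityMeasure μ] {X : ι → Ω → ℝ} (hindep : iIndepFun X μ)
    (hmeas : ∀ i, Measurable (X i)) (hbound : ∀ i, ∀ᵐ ω ∂μ, X i ω ∈ Set.Icc (0 : ℝ) 1)
    {p : ℝ} (hmean : ∀ i, μ[X i] = p) (s : Finset ι) {t : ℝ} (ht : 0 ≤ t) :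
    μ {ω | ∑ i ∈ s, X i ω ≤ s.card * (p - t)}
      ≤ ENNReal.ofReal (Real.exp (-2 * s.card * t ^ 2)) := by
  have hsubG : ∀ i ∈ s, HasSubgaussianMGF (fun ω => p - X i ω) (1 / 4) μ := by
    intro i _
    have h := (hasSubgaussianMGF_of_mem_Icc (hmeas i).aemeasurable (hbound i)).neg
    convert h using 1
    · ext ω
      simp [hmean i]
    · ext
      norm_num
  have hY : iIndepFun (fun i ω => p - X i ω) μ :=
    hindep.comp (fun _ x => p - x) fun _ => measurable_const.sub measurable_id
  have h := HasSubgaussianMGF.measure_sum_ge_le_of_iIndepFun hY hsubG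
    (mul_nonneg (Nat.cast_nonneg s.card) ht)
  have hset : {ω | ∑ i ∈ s, X i ω ≤ s.card * (p - t)}
      = {ω | s.card * t ≤ ∑ i ∈ s, (p - X i ω)} := by
    ext ω
    simp only [Set.mem_ofPred_eq, Finset.sum_sub_distrib, Finset.sum_const, nsmul_eq_mul]
    constructor <;> intro h <;> linarith
  rw [hset, ← ofReal_measureReal]
  refine ENNReal.ofReal_le_ofReal (h.trans_eq ?_)
  congr 1
  simp only [Finset.sum_const, nsmul_eq_mul]
  push_cast
  rcases eq_or_ne (s.card : ℝ) 0 with hs | hs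
  · simp [hs]
  · field_simp
    ring

section TwoPoint

variable {Ω : Type*} [MeasurableSpace Ω] {μ : Measure Ω} [IsProbabilityMeasure μ] {Y : Ω → ℝ}

lemma measurable_decide_eq (hY : Measurable Y) (y : ℝ) : Measurable fun ω => decide (Y ω = y) :=
  measurable_to_bool <| by
    convert hY (measurableSet_singleton y) using 1
    ext
    simp

lemma map_decide_eq_eq_uniformOn (hY : Measurable Y) {y : ℝ} (h : μ {ω | Y ω = y} = 1 / 2) :
    μ.map (fun ω => decide (Y ω = y)) = uniformOn Set.univ := by
  refine Measure.ext_of_singleton fun b => ?_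
  rw [Measure.map_apply (measurable_decide_eq hY y) (measurableSet_singleton b),
    uniformOn_univ_singleton, Fintype.card_bool]
  cases b
  · have hpre : (fun ω => decide (Y ω = y)) ⁻¹' {false} = {ω | Y ω = y}ᶜ := by ext; simp
    rw [hpre, prob_compl_eq_one_sub (measurableSet_eq_fun hY measurable_const), h, one_div,
      ENNReal.one_sub_inv_two]
    simp
  · have hpre : (fun ω => decide (Y ω = y)) ⁻¹' {true} = {ω | Y ω = y} := by ext; simp
    rw [hpre, h]
    simp

lemma ae_eq_mul_boolSign_decide (hY : Measurable Y) {q : ℝ} (hq : q ≠ 0)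
    (hplus : μ {ω | Y ω = q} = 1 / 2) (hminus : μ {ω | Y ω = -q} = 1 / 2) :
    ∀ᵐ ω ∂μ, Y ω = q * boolSign (decide (Y ω = -q)) := by
  have hdisj : Disjoint {ω | Y ω = q} {ω | Y ω = -q} :=
    Set.disjoint_left.2 fun ω h₁ h₂ => hq (by linarith [h₁.symm.trans h₂])
  have hunion : μ ({ω | Y ω = q} ∪ {ω | Y ω = -q}) = 1 := by
    rw [measure_union hdisj (measurableSet_eq_fun hY measurable_const), hplus, hminus,
      ENNReal.add_halves]
  have hor : ∀ᵐ ω ∂μ, Y ω = q ∨ Y ω = -q := by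
    have hcompl : {ω | ¬(Y ω = q ∨ Y ω = -q)} = ({ω | Y ω = q} ∪ {ω | Y ω = -q})ᶜ := by
      ext
      simp
    rw [ae_iff, hcompl, prob_compl_eq_zero_iff
      ((measurableSet_eq_fun hY measurable_const).union (measurableSet_eq_fun hY measurable_const))]
    exact hunion
  filter_upwards [hor] with ω hω
  rcases hω with h | h
  · have : q ≠ -q := fun h' => hq (by linarith)
    simp [h, this, boolSign]
  · simp [h, boolSign]

end TwoPoint

section RandomSigns

variable {Ω : Type*} [MeasurableSpace Ω] {μ : Measure Ω}

lemma exists_uniform_signs [IsProbabilityMeasure μ] {ι : Type*} [Fintype ι] {Y : ι → Ω → ℝ}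
    (hmeas : ∀ p, Measurable (Y p)) {q : ℝ} (hq : q ≠ 0) (hplus : ∀ p, μ {ω | Y p ω = q} = 1 / 2)
    (hminus : ∀ p, μ {ω | Y p ω = -q} = 1 / 2) (hindep : iIndepFun Y μ) :
    ∃ β : Ω → ι → Bool, Measurable β ∧ μ.map β = uniformOn Set.univ ∧
      ∀ᵐ ω ∂μ, ∀ p, Y p ω = q * boolSign (β ω p) := by
  refine ⟨fun ω p => decide (Y p ω = -q),
    measurable_pi_lambda _ fun p => measurable_decide_eq (hmeas p) (-q), ?_,
    ae_all_iff.2 fun p => ae_eq_mul_boolSign_decide (hmeas p) hq (hplus p) (hminus p)⟩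
  have hβ : iIndepFun (fun p ω => decide (Y p ω = -q)) μ :=
    hindep.comp _ fun _ => measurable_decide_eq measurable_id (-q)
  rw [(iIndepFun_iff_map_fun_eq_pi_map
    fun p => (measurable_decide_eq (hmeas p) (-q)).aemeasurable).1 hβ, uniformOn_univ_pi]
  simp_rw [map_decide_eq_eq_uniformOn (hmeas _) (hminus _)]

variable {ι γ : Type*} [Fintype ι] [Fintype γ] [Nonempty γ] [MeasurableSpace γ]
  [MeasurableSingletonClass γ] {Z : Ω → ι → γ}

lemma map_eval_eq_uniformOn (hZ : Measurable Z) (hlaw : μ.map Z = uniformOn Set.univ) (i : ι) :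
    μ.map (fun ω => Z ω i) = uniformOn Set.univ := by
  rw [← Function.comp_def (fun z : ι → γ => z i), ← Measure.map_map (measurable_pi_apply i) hZ,
    hlaw, uniformOn_univ_pi, (measurePreserving_eval _ i).map_eq]

lemma iIndepFun_eval_of_map_eq_uniformOn [IsProbabilityMeasure μ] (hZ : Measurable Z)
    (hlaw : μ.map Z = uniformOn Set.univ) : iIndepFun (fun i ω => Z ω i) μ := by
  rw [iIndepFun_iff_map_fun_eq_pi_map fun i => (hZ.eval (a := i)).aemeasurable]
  simp_rw [map_eval_eq_uniformOn hZ hlaw, ← uniformOn_univ_pi]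
  exact hlaw

end RandomSigns

def colShear {κ ι : Type*} [DecidableEq ι] (z : ι) : (κ × ι → Bool) ≃ (ι → κ → Bool) where
  toFun σ i k := if i = z then σ (k, z) else xor (σ (k, z)) (σ (k, i))
  invFun τ p := if p.2 = z then τ z p.1 else xor (τ z p.1) (τ p.2 p.1)
  left_inv σ := by
    funext ⟨k, i⟩
    by_cases hi : i = z <;> simp [hi]
  right_inv τ := by
    funext i k
    by_cases hi : i = z <;> simp [hi]

lemma sum_boolSign_mul_div_card_eq_signMean_colShear {κ ι : Type*} [Fintype κ] [DecidableEq ι]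
    (σ : κ × ι → Bool) {i z : ι} (hi : i ≠ z) :
    (∑ k, boolSign (σ (k, i)) * boolSign (σ (k, z))) / Fintype.card κ
      = signMean (colShear z σ i) := by
  simp [signMean, colShear, hi, boolSign_xor, mul_comm]

lemma transpose_mulVec_mulVec_single_of_signs {κ ι : Type*} [Fintype κ] [Fintype ι]
    [DecidableEq ι] (A : Matrix κ ι ℝ) (σ : κ × ι → Bool) {q : ℝ}
    (hq : Fintype.card κ * q ^ 2 = 1) (hA : ∀ k i, A k i = q * boolSign (σ (k, i))) (z : ι) :
    (Aᵀ *ᵥ (A *ᵥ Pi.single z 1)) z = 1 ∧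
      ∀ i ≠ z, (Aᵀ *ᵥ (A *ᵥ Pi.single z 1)) i = signMean (colShear z σ i) := by
  have hcard : (Fintype.card κ : ℝ) ≠ 0 := left_ne_zero_of_mul_eq_one hq
  have hgram : ∀ i, (Aᵀ *ᵥ (A *ᵥ Pi.single z 1)) i
      = (∑ k, boolSign (σ (k, i)) * boolSign (σ (k, z))) / Fintype.card κ := by
    intro i
    rw [Matrix.mulVec_single_one, eq_div_iff hcard]
    simp only [Matrix.mulVec, dotProduct, Matrix.transpose_apply, Matrix.col_apply, hA,
      Finset.sum_mul]
    refine Finset.sum_congr rfl fun k _ => ?_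
    linear_combination boolSign (σ (k, i)) * boolSign (σ (k, z)) * hq
  refine ⟨?_, fun i hi => (hgram i).trans (sum_boolSign_mul_div_card_eq_signMean_colShear σ hi)⟩
  rw [hgram]
  simp [boolSign_mul_self, hcard]

lemma exists_uniform_sign_columns {Ω κ ι : Type*} [MeasurableSpace Ω] {μ : Measure Ω}
    [IsProbabilityMeasure μ] [Fintype κ] [Nonempty κ] [Fintype ι] [DecidableEq ι]
    {A : Ω → Matrix κ ι ℝ} (hmeas : ∀ k i, Measurable fun ω => A ω k i)
    (hplus : ∀ k i, μ {ω | A ω k i = 1 / Real.sqrt (Fintype.card κ)} = 1 / 2)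
    (hminus : ∀ k i, μ {ω | A ω k i = -(1 / Real.sqrt (Fintype.card κ))} = 1 / 2)
    (hindep : iIndepFun (fun (p : κ × ι) ω => A ω p.1 p.2) μ) (z : ι) :
    ∃ Z : Ω → ι → κ → Bool, Measurable Z ∧ μ.map Z = uniformOn Set.univ ∧
      ∀ᵐ ω ∂μ, ((A ω)ᵀ *ᵥ (A ω *ᵥ Pi.single z 1)) z = 1 ∧
        ∀ i ≠ z, ((A ω)ᵀ *ᵥ (A ω *ᵥ Pi.single z 1)) i = signMean (Z ω i) := by
  classical
  have hcard : (0 : ℝ) < Fintype.card κ := Nat.cast_pos.2 Fintype.card_pos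
  have hq : (Fintype.card κ : ℝ) * (1 / Real.sqrt (Fintype.card κ)) ^ 2 = 1 := by
    rw [div_pow, Real.sq_sqrt hcard.le]
    field_simp
  obtain ⟨β, hβ, hβlaw, hAβ⟩ := exists_uniform_signs (fun p : κ × ι => hmeas p.1 p.2)
    (one_div_ne_zero (Real.sqrt_pos.2 hcard).ne') (fun p => hplus p.1 p.2)
    (fun p => hminus p.1 p.2) hindep
  refine ⟨fun ω => colShear z (β ω), (measurable_of_finite _).comp hβ, ?_, ?_⟩
  · rw [← Function.comp_def (colShear z), ← Measure.map_map (measurable_of_finite _) hβ, hβlaw,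
      map_uniformOn_univ_equiv]
  · filter_upwards [hAβ] with ω hω
    exact transpose_mulVec_mulVec_single_of_signs (A ω) (β ω) hq (fun k i => hω (k, i)) z

section Columns

variable {Ω ι κ : Type*} [MeasurableSpace Ω] {μ : Measure Ω} [Fintype ι] [Fintype κ]
  {Z : Ω → ι → κ → Bool}

lemma integral_sq_signMean_of_map_eq_uniformOn (hZ : Measurable Z)
    (hlaw : μ.map Z = uniformOn Set.univ) (i : ι) :
    ∫ ω, signMean (Z ω i) ^ 2 ∂μ = 1 / Fintype.card κ := by
  classical
  rw [← integral_signMean_sq, ← map_eval_eq_uniformOn hZ hlaw i,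
    integral_map hZ.eval.aemeasurable (measurable_of_finite _).aestronglyMeasurable]

lemma measure_sum_sq_le_le_of_ae_eq_signMean [IsProbabilityMeasure μ] (hZ : Measurable Z)
    (hlaw : μ.map Z = uniformOn Set.univ) {a : Ω → ι → ℝ} {s : Finset ι}
    (ha : ∀ᵐ ω ∂μ, ∀ i ∈ s, a ω i = signMean (Z ω i)) {t : ℝ} (ht : 0 ≤ t) :
    μ {ω | ∑ i ∈ s, a ω i ^ 2 ≤ s.card * (1 / Fintype.card κ - t)}
      ≤ ENNReal.ofReal (Real.exp (-2 * s.card * t ^ 2)) := by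
  classical
  have hindep : iIndepFun (fun i ω => signMean (Z ω i) ^ 2) μ :=
    (iIndepFun_eval_of_map_eq_uniformOn hZ hlaw).comp (fun _ τ => signMean τ ^ 2)
      fun _ => measurable_of_finite _
  refine le_of_eq_of_le (measure_congr ?_) (measure_sum_le_le_of_iIndepFun_mem_Icc hindep
    (fun i => (measurable_of_finite (fun τ : κ → Bool => signMean τ ^ 2)).comp hZ.eval)
    (fun i => ae_of_all _ fun ω => sq_signMean_mem_Icc _)
    (integral_sq_signMean_of_map_eq_uniformOn hZ hlaw) s ht)
  filter_upwards [ha] with ω hω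
  change (_ ≤ _) = (_ ≤ _)
  rw [Finset.sum_congr rfl fun i hi => by rw [hω i hi]]

end Columns

lemma one_sub_le_measure_le_sum_sq {Ω ι : Type*} [MeasurableSpace Ω] {μ : Measure Ω}
    [IsProbabilityMeasure μ] [Fintype ι] [DecidableEq ι] {a : Ω → ι → ℝ} {z : ι}
    (hz : ∀ᵐ ω ∂μ, a ω z = 1) {c s : ℝ} {δ : ℝ≥0∞} (hc : 1 < c) (hs : 1 / (c ^ 2 - 1) ≤ s)
    (htail : μ {ω | ∑ i ∈ Finset.univ.filter (· ≠ z), a ω i ^ 2 ≤ s} ≤ δ) :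
    1 - δ ≤ μ {ω | c ^ 2 / (c ^ 2 - 1) ≤ ∑ i, a ω i ^ 2} := by
  set E := {ω | ∑ i ∈ Finset.univ.filter (· ≠ z), a ω i ^ 2 ≤ s}
  have hcompl : Eᶜ ≤ᵐ[μ] {ω | c ^ 2 / (c ^ 2 - 1) ≤ ∑ i, a ω i ^ 2} := by
    filter_upwards [hz] with ω hω hE
    have hsplit := Finset.sum_filter_add_sum_filter_not Finset.univ (· ≠ z) fun i => a ω i ^ 2
    simp only [ne_eq, not_not, Finset.filter_eq', Finset.mem_univ, if_true,
      Finset.sum_singleton, hω] at hsplit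
    have hc2 : c ^ 2 / (c ^ 2 - 1) = 1 + 1 / (c ^ 2 - 1) := by
      have : c ^ 2 - 1 ≠ 0 := by nlinarith
      field_simp
      ring
    have hlt : s < ∑ i ∈ Finset.univ.filter (· ≠ z), a ω i ^ 2 := not_le.1 hE
    show c ^ 2 / (c ^ 2 - 1) ≤ ∑ i, a ω i ^ 2
    linarith
  calc 1 - δ ≤ 1 - μ E := tsub_le_tsub_left htail 1
    _ ≤ μ Eᶜ := by
      rw [tsub_le_iff_left, ← measure_univ (μ := μ)]
      exact measure_univ_le_add_compl E
    _ ≤ _ := measure_mono_ae hcompl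

theorem stmt18 {m n : ℕ} (hm : 1 ≤ m) (hn : 2 ≤ n)
    {Ω : Type*} [MeasurableSpace Ω] (μ : Measure Ω) [IsProbabilityMeasure μ]
    (A : Ω → Matrix (Fin m) (Fin n) ℝ)
    (hmeas : ∀ i j, Measurable fun ω => A ω i j)
    -- each entry equals `+1/√m` or `−1/√m`, each with probability `1/2`
    (hplus : ∀ i j, μ {ω | A ω i j = 1 / Real.sqrt m} = 1 / 2)
    (hminus : ∀ i j, μ {ω | A ω i j = -(1 / Real.sqrt m)} = 1 / 2)
    -- the entries are mutually independent
    (hindep : iIndepFun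
      (fun (ij : Fin m × Fin n) (ω : Ω) => A ω ij.1 ij.2) μ)
    (e₁ : Fin n → ℝ) (he₁ : e₁ = fun j => if j = (⟨0, by omega⟩ : Fin n) then 1 else 0)
    (a : Ω → Fin n → ℝ) (ha : a = fun ω => (Matrix.transpose (A ω)).mulVec ((A ω).mulVec e₁)) :
    -- (i) the first coordinate of `a` equals 1 almost surely
    (∀ᵐ ω ∂μ, a ω ⟨0, by omega⟩ = 1) ∧
    -- (ii) `E[aᵢ²] = 1/m` for every coordinate other than the first
    (∀ i : Fin n, i ≠ ⟨0, by omega⟩ → ∫ ω, (a ω i) ^ 2 ∂μ = 1 / m) ∧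
    -- (iii) the Hoeffding-type lower-tail bound
    (∀ t : ℝ, 0 < t →
      μ {ω | ∑ i ∈ Finset.univ.filter (fun i : Fin n => i ≠ (⟨0, by omega⟩ : Fin n)),
          (a ω i) ^ 2 ≤ ((n : ℝ) - 1) * (1 / m - t)} ≤
        ENNReal.ofReal (Real.exp (-2 * ((n : ℝ) - 1) * t ^ 2))) ∧
    -- in particular: `‖a‖₂² ≥ c²/(c²−1)` with high probability
    (∀ c t : ℝ, 1 < c → 0 < t → 1 / (c ^ 2 - 1) ≤ ((n : ℝ) - 1) * (1 / m - t) →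
      1 - ENNReal.ofReal (Real.exp (-2 * ((n : ℝ) - 1) * t ^ 2)) ≤
        μ {ω | c ^ 2 / (c ^ 2 - 1) ≤ ∑ i, (a ω i) ^ 2}) := by
  set z : Fin n := ⟨0, by omega⟩
  have : Nonempty (Fin m) := ⟨⟨0, hm⟩⟩
  obtain ⟨Z, hZ, hZlaw, hAZ⟩ := exists_uniform_sign_columns hmeas (by simpa using hplus)
    (by simpa using hminus) hindep z
  have he : e₁ = Pi.single z 1 := by
    rw [he₁]
    ext j
    simp [Pi.single_apply]
  have haZ : ∀ᵐ ω ∂μ, a ω z = 1 ∧ ∀ i ≠ z, a ω i = signMean (Z ω i) := by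
    rw [ha, he]
    exact hAZ
  have hz : ∀ᵐ ω ∂μ, a ω z = 1 := haZ.mono fun ω h => h.1
  have hcard : ((Finset.univ.filter (· ≠ z)).card : ℝ) = n - 1 := by
    rw [Finset.filter_ne', Finset.card_erase_of_mem (Finset.mem_univ z)]
    simp [Nat.cast_sub (by omega : 1 ≤ n)]
  have htail : ∀ t : ℝ, 0 < t → μ {ω | ∑ i ∈ Finset.univ.filter (· ≠ z), a ω i ^ 2
      ≤ ((n : ℝ) - 1) * (1 / m - t)} ≤ ENNReal.ofReal (Real.exp (-2 * ((n : ℝ) - 1) * t ^ 2)) := by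
    intro t ht
    have h := measure_sum_sq_le_le_of_ae_eq_signMean hZ hZlaw (s := Finset.univ.filter (· ≠ z))
      (haZ.mono fun ω h i hi => h.2 i (Finset.mem_filter.1 hi).2) ht.le
    rwa [hcard, Fintype.card_fin] at h
  refine ⟨hz, fun i hi => ?_, htail,
    fun c t hc ht hs => one_sub_le_measure_le_sum_sq hz hc hs (htail t ht)⟩
  rw [← Fintype.card_fin m, ← integral_sq_signMean_of_map_eq_uniformOn hZ hZlaw i]
  exact integral_congr_ae (haZ.mono fun ω h => by simp only [h.2 i hi])
end
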